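/- arXiv:2207.09354 — 2 statements merged into one kernel-verified Lean document; each statement's English description precedes it below -/
import Mathlib

section
/- Let G be a graph on n vertices, let A, B be disjoint vertex subsets, and suppose μ(H[A,B]) < μ(G[A,B]) − αn for a spanning subgraph H of G. Then there exist disjoint subsets A' ⊆ A, B' ⊆ B with |A'| = |B'| > αn such that G[A',B'] contains a perfect matching between A' and B' but H contains no edge between A' and B'. -/
open Finset

section Defs

variable {V : Type*}

/-- A matching in `G`: a finset of edges of `G` that are pairwise vertex-disjoint. -/
def IsMatchingSet (G : SimpleGraph V) (M : Finset (Sym2 V)) : Prop :=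
  (∀ e ∈ M, e ∈ G.edgeSet) ∧
  ∀ e ∈ M, ∀ f ∈ M, e ≠ f → ∀ v : V, v ∈ e → v ∉ f

/-- The maximum matching size `μ(G)`. -/
noncomputable def matchNum (G : SimpleGraph V) : ℕ :=
  sSup {k | ∃ M : Finset (Sym2 V), IsMatchingSet G M ∧ M.card = k}

/-- The bipartite subgraph `G[A,B]`: edges of `G` with one endpoint in `A`
and the other in `B`. -/
def biSub (G : SimpleGraph V) (A B : Finset V) : SimpleGraph V where
  Adj u v := G.Adj u v ∧ ((u ∈ A ∧ v ∈ B) ∨ (u ∈ B ∧ v ∈ A))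
  symm := ⟨fun u v h =>
    ⟨h.1.symm, h.2.elim (fun hh => Or.inr ⟨hh.2, hh.1⟩) (fun hh => Or.inl ⟨hh.2, hh.1⟩)⟩⟩
  loopless := ⟨fun v h => G.loopless.irrefl v h.1⟩

end Defs

/-! Fix a maximum matching `M` of `G[A,B]` and join `e ∈ M` to `f ∈ M` when `H` joins the
`A`-end of `e` to the `B`-end of `f`; matchings of this auxiliary bipartite graph on two copies
of `M` are matchings of `H[A,B]`. By the deficiency form of Hall's theorem it has a matching
missing at most `|S| - |N(S)|` edges of `M` for some `S ⊆ M`, so `|S| - |N(S)| > αn`, and the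
edges of `S \ N(S)` span the required `A'` and `B'`. -/

namespace Finset

variable {ι α : Type*} [Fintype ι] [DecidableEq α]

theorem exists_injective_of_card_le_biUnion_card_add (t : ι → Finset α) (d : ℕ)
    (h : ∀ s : Finset ι, #s ≤ #(s.biUnion t) + d) :
    ∃ T : Finset ι, ∃ f : T → α, Function.Injective f ∧ (∀ i : T, f i ∈ t i) ∧
      Fintype.card ι ≤ #T + d := by
  -- Hall's theorem after adding `d` new elements to every `t i`
  let t' : ι → Finset (α ⊕ Fin d) := fun i => (t i).disjSum univ
  have hall : ∀ s : Finset ι, #s ≤ #(s.biUnion t') := by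
    intro s
    rcases s.eq_empty_or_nonempty with rfl | ⟨i, hi⟩
    · simp
    calc #s ≤ #((s.biUnion t).disjSum univ) := by simpa using h s
      _ ≤ #(s.biUnion t') := card_le_card fun x hx => ?_
    rcases x with x | j
    · obtain ⟨k, hk, hx⟩ := mem_biUnion.1 (inl_mem_disjSum.1 hx)
      exact mem_biUnion.2 ⟨k, hk, inl_mem_disjSum.2 hx⟩
    · exact mem_biUnion.2 ⟨i, hi, inr_mem_disjSum.2 (mem_univ j)⟩
  obtain ⟨f, hf, hft⟩ := (all_card_le_biUnion_card_iff_exists_injective t').1 hall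
  let T := univ.filter fun i => (f i).isLeft
  have hTf : ∀ i : T, (f i).isLeft := fun i => (mem_filter.1 i.2).2
  refine ⟨T, fun i => (f i).getLeft (hTf i), fun i j hij => ?_, fun i => ?_, ?_⟩
  · refine Subtype.ext (hf ?_)
    rw [← Sum.inl_getLeft _ (hTf i), ← Sum.inl_getLeft _ (hTf j)]
    exact congrArg Sum.inl hij
  · rw [← inl_mem_disjSum (t := (univ : Finset (Fin d))), Sum.inl_getLeft]
    exact hft i
  · have hTc : #(univ.filter fun i => ¬ (f i).isLeft) ≤ d := by
      calc _ = #((univ.filter fun i => ¬ (f i).isLeft).image f) :=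
            (card_image_of_injective _ hf).symm
        _ ≤ #((∅ : Finset α).disjSum (univ : Finset (Fin d))) := card_le_card fun x hx => ?_
        _ = d := by simp
      obtain ⟨i, hi, rfl⟩ := mem_image.1 hx
      rcases hfi : f i with y | j
      · simp [hfi] at hi
      · exact inr_mem_disjSum.2 (mem_univ j)
    have := card_filter_add_card_filter_not (s := univ) fun i => (f i).isLeft
    rw [card_univ] at this
    change #T + _ = _ at this
    omega

theorem exists_injective_card_le_add_card_sub_card_biUnion (t : ι → Finset α) :
    ∃ s T : Finset ι, ∃ f : T → α, Function.Injective f ∧ (∀ i : T, f i ∈ t i) ∧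
      Fintype.card ι ≤ #T + (#s - #(s.biUnion t)) := by
  obtain ⟨s, -, hs⟩ :=
    exists_max_image univ (fun s : Finset ι => #s - #(s.biUnion t)) univ_nonempty
  obtain ⟨T, f, hf, hft, hT⟩ := exists_injective_of_card_le_biUnion_card_add t
    (#s - #(s.biUnion t)) fun s' => by have := hs s' (mem_univ _); omega
  exact ⟨s, T, f, hf, hft, hT⟩

end Finset

section Matching

variable {V : Type*} {G : SimpleGraph V}

theorem IsMatchingSet.eq_of_mem {M : Finset (Sym2 V)} (hM : IsMatchingSet G M) {e f : Sym2 V}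
    (he : e ∈ M) (hf : f ∈ M) {v : V} (hve : v ∈ e) (hvf : v ∈ f) : e = f :=
  by_contra fun hne => hM.2 e he f hf hne v hve hvf

theorem isMatchingSet_empty (G : SimpleGraph V) : IsMatchingSet G ∅ := by
  simp [IsMatchingSet]

theorem matchNum_le {k : ℕ} (h : ∀ M, IsMatchingSet G M → #M ≤ k) : matchNum G ≤ k :=
  csSup_le ⟨0, ∅, isMatchingSet_empty G, rfl⟩ fun _ ⟨M, hM, hk⟩ => hk ▸ h M hM

section Finite

variable [Finite V]

theorem bddAbove_card_isMatchingSet (G : SimpleGraph V) :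
    BddAbove {k | ∃ M : Finset (Sym2 V), IsMatchingSet G M ∧ #M = k} := by
  have := Fintype.ofFinite (Sym2 V)
  exact ⟨Fintype.card (Sym2 V), by rintro _ ⟨M, -, rfl⟩; exact card_le_univ M⟩

theorem IsMatchingSet.card_le_matchNum {M : Finset (Sym2 V)} (hM : IsMatchingSet G M) :
    #M ≤ matchNum G :=
  le_csSup (bddAbove_card_isMatchingSet G) ⟨M, hM, rfl⟩

theorem exists_isMatchingSet_card_eq_matchNum (G : SimpleGraph V) :
    ∃ M, IsMatchingSet G M ∧ #M = matchNum G :=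
  Nat.sSup_mem (s := {k | ∃ M, IsMatchingSet G M ∧ #M = k})
    ⟨0, ∅, isMatchingSet_empty G, rfl⟩ (bddAbove_card_isMatchingSet G)

end Finite

variable {A B : Finset V}

theorem exists_eq_mk_of_mem_edgeSet_biSub {e : Sym2 V} (he : e ∈ (biSub G A B).edgeSet) :
    ∃ a ∈ A, ∃ b ∈ B, G.Adj a b ∧ e = s(a, b) := by
  induction e using Sym2.ind with
  | _ x y =>
    obtain ⟨hxy, ⟨hx, hy⟩ | ⟨hx, hy⟩⟩ := he
    · exact ⟨x, hx, y, hy, hxy, rfl⟩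
    · exact ⟨y, hy, x, hx, hxy.symm, Sym2.eq_swap⟩

theorem IsMatchingSet.exists_endpoints_biSub {M : Finset (Sym2 V)}
    (hM : IsMatchingSet (biSub G A B) M) :
    ∃ a b : M → V, Function.Injective a ∧ Function.Injective b ∧
      ∀ e, a e ∈ A ∧ b e ∈ B ∧ G.Adj (a e) (b e) ∧ (e : Sym2 V) = s(a e, b e) := by
  choose a ha b hb hab he using fun e : M => exists_eq_mk_of_mem_edgeSet_biSub (hM.1 e e.2)
  refine ⟨a, b, fun e f hef => ?_, fun e f hef => ?_, fun e => ⟨ha e, hb e, hab e, he e⟩⟩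
  · refine Subtype.ext (hM.eq_of_mem e.2 f.2 (v := a e) ?_ ?_)
    · rw [he e]; exact Sym2.mem_mk_left _ _
    · rw [hef, he f]; exact Sym2.mem_mk_left _ _
  · refine Subtype.ext (hM.eq_of_mem e.2 f.2 (v := b e) ?_ ?_)
    · rw [he e]; exact Sym2.mem_mk_right _ _
    · rw [hef, he f]; exact Sym2.mem_mk_right _ _

theorem matchNum_biSub_le_card_left (G : SimpleGraph V) (A B : Finset V) :
    matchNum (biSub G A B) ≤ #A :=
  matchNum_le fun M hM => by
    obtain ⟨a, _, ha, _, hab⟩ := hM.exists_endpoints_biSub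
    simpa using card_le_card_of_injOn a (s := univ) (fun e _ => (hab e).1) ha.injOn

theorem card_le_matchNum_biSub [Finite V] {ι : Type*} [Fintype ι] (hAB : Disjoint A B)
    {a b : ι → V} (ha : Function.Injective a) (hb : Function.Injective b)
    (hA : ∀ i, a i ∈ A) (hB : ∀ i, b i ∈ B) (hG : ∀ i, G.Adj (a i) (b i)) :
    Fintype.card ι ≤ matchNum (biSub G A B) := by
  classical
  have hne : ∀ i j, a i ≠ b j := fun i j h => disjoint_left.1 hAB (hA i) (h ▸ hB j)
  have hinj : Function.Injective fun i => s(a i, b i) := fun i j h => by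
    rcases Sym2.eq_iff.1 h with ⟨h, -⟩ | ⟨h, -⟩
    exacts [ha h, (hne i j h).elim]
  rw [← card_univ, ← card_image_of_injective univ hinj]
  refine IsMatchingSet.card_le_matchNum ⟨?_, ?_⟩
  · simp only [forall_mem_image, mem_univ, true_implies]
    exact fun i => ⟨hG i, Or.inl ⟨hA i, hB i⟩⟩
  · simp only [forall_mem_image, mem_univ, true_implies]
    intro i j hij v hvi hvj
    have hij : i ≠ j := by rintro rfl; exact hij rfl
    rw [Sym2.mem_iff] at hvi hvj
    rcases hvi with rfl | rfl <;> rcases hvj with h | h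
    exacts [hij (ha h), hne _ _ h, hne _ _ h.symm, hij (hb h)]

end Matching

theorem stmt_4_general {V : Type*} [Fintype V] (G H : SimpleGraph V) (α : ℝ)
    (A B : Finset V) (hAB : Disjoint A B)
    (h : (matchNum (biSub H A B) : ℝ) <
      (matchNum (biSub G A B) : ℝ) - α * Fintype.card V) :
    ∃ A' B' : Finset V, A' ⊆ A ∧ B' ⊆ B ∧ A'.card = B'.card ∧
      (A'.card : ℝ) > α * Fintype.card V ∧
      matchNum (biSub G A' B') = A'.card ∧
      ∀ u ∈ A', ∀ v ∈ B', ¬ H.Adj u v := by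
  classical
  obtain ⟨M, hM, hMcard⟩ := exists_isMatchingSet_card_eq_matchNum (biSub G A B)
  obtain ⟨a, b, ha, hb, hab⟩ := hM.exists_endpoints_biSub
  set N : M → Finset M := fun e => univ.filter fun f => H.Adj (a e) (b f)
  obtain ⟨S, T, g, hg, hgN, hT⟩ := exists_injective_card_le_add_card_sub_card_biUnion N
  set S' := S \ S.biUnion N
  have hTH : #T ≤ matchNum (biSub H A B) := by
    simpa using card_le_matchNum_biSub hAB (ha.comp Subtype.val_injective) (hb.comp hg)
      (fun i => (hab i).1) (fun i => (hab _).2.1) fun i => (mem_filter.1 (hgN i)).2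
  have hS' : α * Fintype.card V < #S' := by
    have hdef : #S - #(S.biUnion N) ≤ #S' := le_card_sdiff _ _
    have : matchNum (biSub G A B) ≤ matchNum (biSub H A B) + #S' := by
      rw [← hMcard, ← Fintype.card_coe]; omega
    have : (matchNum (biSub G A B) : ℝ) ≤ matchNum (biSub H A B) + #S' := by exact_mod_cast this
    linarith
  have hA' : S'.image a ⊆ A := image_subset_iff.2 fun e _ => (hab e).1
  have hB' : S'.image b ⊆ B := image_subset_iff.2 fun e _ => (hab e).2.1
  have hSa : #(S'.image a) = #S' := card_image_of_injective S' ha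
  have hSb : #(S'.image b) = #S' := card_image_of_injective S' hb
  refine ⟨S'.image a, S'.image b, hA', hB', hSa.trans hSb.symm, hSa ▸ hS',
    le_antisymm (matchNum_biSub_le_card_left _ _ _) ?_, ?_⟩
  · rw [hSa]
    simpa using card_le_matchNum_biSub (hAB.mono hA' hB')
      (ha.comp Subtype.val_injective) (hb.comp Subtype.val_injective)
      (fun e : S' => mem_image_of_mem a e.2) (fun e : S' => mem_image_of_mem b e.2)
      fun e => (hab e).2.2.1
  · simp only [forall_mem_image]
    intro e he f hf hef
    exact (mem_sdiff.1 hf).2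
      (mem_biUnion.2 ⟨e, (mem_sdiff.1 he).1, mem_filter.2 ⟨mem_univ _, hef⟩⟩)

/-- If `μ(H[A,B]) < μ(G[A,B]) - α·n` for a spanning subgraph `H` of `G` and disjoint
`A, B`, then there are `A' ⊆ A`, `B' ⊆ B` with `|A'| = |B'| > α·n` such that `G[A',B']`
has a perfect matching between `A'` and `B'` while `H` has no edge between them. -/
theorem stmt_4 {V : Type*} [Fintype V] (G H : SimpleGraph V) (hHG : H ≤ G) (α : ℝ)
    (A B : Finset V) (hAB : Disjoint A B)
    (h : (matchNum (biSub H A B) : ℝ) <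
      (matchNum (biSub G A B) : ℝ) - α * Fintype.card V) :
    ∃ A' B' : Finset V, A' ⊆ A ∧ B' ⊆ B ∧ A'.card = B'.card ∧
      (A'.card : ℝ) > α * Fintype.card V ∧
      matchNum (biSub G A' B') = A'.card ∧
      ∀ u ∈ A', ∀ v ∈ B', ¬ H.Adj u v :=
  stmt_4_general G H α A B hAB h
end

section
/- Let M be a matching in a graph G whose vertices are partitioned, with each matched vertex labeled either A or B such that every edge of M joins an A-vertex to a B-vertex, and let C_1, …, C_k be disjoint vertex classes. Call a class C_i A-majority if more than 3/4 of its M-matched vertices are labeled A, and B-majority if more than 3/4 are labeled B. Let M' be obtained from M by deleting every edge (u,v) with u labeled A, v labeled B, such that u lies in a B-majority class or v lies in an A-majority class. Then |M'| ≥ |M|/2. -/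
open Finset

section Defs

variable {V : Type*} [DecidableEq V]

/-- The vertices matched by a matching given as a finset of (A-endpoint, B-endpoint)
pairs. -/
def matchedVerts (M : Finset (V × V)) : Finset V :=
  M.image Prod.fst ∪ M.image Prod.snd

/-- More than `3/4` of the `M`-matched vertices of the class `Ci` lie in `S`. -/
def Majority (M : Finset (V × V)) (S : Finset V) (Ci : Finset V) : Prop :=
  4 * ((Ci ∩ matchedVerts M) ∩ S).card > 3 * (Ci ∩ matchedVerts M).card

end Defs

/-- Deleting from a matching `M` (each edge from an `A`-vertex to a `B`-vertex) every
edge whose `A`-endpoint lies in a `B`-majority class or whose `B`-endpoint lies in an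
`A`-majority class keeps at least half of the edges. -/
theorem stmt_7 {V : Type*} [Fintype V] [DecidableEq V] (G : SimpleGraph V)
    (M M' : Finset (V × V)) (A B : Finset V) (hAB : Disjoint A B)
    (k : ℕ) (C : Fin k → Finset V)
    (hCdisj : ∀ i j, i ≠ j → Disjoint (C i) (C j))
    (hMadj : ∀ e ∈ M, G.Adj e.1 e.2)
    (hMdisj : ∀ e ∈ M, ∀ f ∈ M, e ≠ f →
      e.1 ≠ f.1 ∧ e.1 ≠ f.2 ∧ e.2 ≠ f.1 ∧ e.2 ≠ f.2)
    (hlab : ∀ e ∈ M, e.1 ∈ A ∧ e.2 ∈ B)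
    (hM' : ∀ e, e ∈ M' ↔ e ∈ M ∧
      ¬ ((∃ i, e.1 ∈ C i ∧ Majority M B (C i)) ∨ (∃ i, e.2 ∈ C i ∧ Majority M A (C i)))) :
    M.card ≤ 2 * M'.card := by
  classical
  set m : Finset V := matchedVerts M with hm
  have hsub : M' ⊆ M := fun e he => ((hM' e).1 he).1
  set D : Finset (V × V) := M \ M' with hDdef
  have hcardD : M.card = M'.card + D.card := by
    have h1 := card_sdiff_of_subset hsub
    rw [← hDdef] at h1
    have h2 := card_le_card hsub
    omega
  -- the injection from deleted edges to vertices
  set φ : V × V → V := fun e =>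
    if (∃ i, e.1 ∈ C i ∧ Majority M B (C i)) then e.1 else e.2 with hφ
  -- the set of "bad" vertices
  set Bad : Finset V := univ.filter (fun v => v ∈ m ∧ ∃ i, v ∈ C i ∧
      ((v ∈ A ∧ Majority M B (C i)) ∨ (v ∈ B ∧ Majority M A (C i)))) with hBad
  -- per class bad sets
  set Badi : Fin k → Finset V := fun i =>
    ((C i ∩ m) ∩ A).filter (fun _ => Majority M B (C i)) ∪
      ((C i ∩ m) ∩ B).filter (fun _ => Majority M A (C i)) with hBadi
  -- step 1 : |D| ≤ |Bad|
  have hinj : Set.InjOn φ D := by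
    intro e he f hf hef
    by_contra hne
    have heM : e ∈ M := (mem_sdiff.1 he).1
    have hfM : f ∈ M := (mem_sdiff.1 hf).1
    obtain ⟨h1, h2, h3, h4⟩ := hMdisj e heM f hfM hne
    simp only [hφ] at hef
    split_ifs at hef <;> [exact h1 hef; exact h2 hef; exact h3 hef; exact h4 hef]
  have himg : D.image φ ⊆ Bad := by
    intro v hv
    obtain ⟨e, he, rfl⟩ := mem_image.1 hv
    have heM : e ∈ M := (mem_sdiff.1 he).1
    have hdel : (∃ i, e.1 ∈ C i ∧ Majority M B (C i)) ∨
        (∃ i, e.2 ∈ C i ∧ Majority M A (C i)) := by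
      by_contra h
      exact (mem_sdiff.1 he).2 ((hM' e).2 ⟨heM, h⟩)
    have h1m : e.1 ∈ m := by
      simp only [hm, matchedVerts, mem_union, mem_image]
      exact Or.inl ⟨e, heM, rfl⟩
    have h2m : e.2 ∈ m := by
      simp only [hm, matchedVerts, mem_union, mem_image]
      exact Or.inr ⟨e, heM, rfl⟩
    simp only [hBad, mem_filter, mem_univ, true_and]
    by_cases hc : (∃ i, e.1 ∈ C i ∧ Majority M B (C i))
    · have hφe : φ e = e.1 := by simp only [hφ]; rw [if_pos hc]
      rw [hφe]
      obtain ⟨i, hiC, hiM⟩ := hc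
      exact ⟨h1m, i, hiC, Or.inl ⟨(hlab e heM).1, hiM⟩⟩
    · have hφe : φ e = e.2 := by simp only [hφ]; rw [if_neg hc]
      rw [hφe]
      obtain ⟨i, hiC, hiM⟩ := hdel.resolve_left hc
      exact ⟨h2m, i, hiC, Or.inr ⟨(hlab e heM).2, hiM⟩⟩
  have hDBad : D.card ≤ Bad.card := by
    calc D.card = (D.image φ).card := (Finset.card_image_of_injOn hinj).symm
    _ ≤ Bad.card := card_le_card himg
  -- step 2 : per-class bound
  have hab : ∀ i, ((C i ∩ m) ∩ A).card + ((C i ∩ m) ∩ B).card ≤ (C i ∩ m).card := by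
    intro i
    rw [← card_union_of_disjoint (hAB.mono inter_subset_right inter_subset_right)]
    exact card_le_card (union_subset inter_subset_left inter_subset_left)
  have hclass : ∀ i, 4 * (Badi i).card ≤ (C i ∩ m).card := by
    intro i
    have habi := hab i
    by_cases hB : Majority M B (C i) <;> by_cases hA : Majority M A (C i) <;>
      simp only [hBadi, filter_const, hB, hA, if_true, if_false, union_empty, empty_union, card_empty] <;>
      simp only [Majority, ← hm] at hB hA <;> omega
  -- step 3 : Bad ⊆ ⋃ Badi
  have hBadsub : Bad ⊆ univ.biUnion Badi := by
    intro v hv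
    simp only [hBad, mem_filter, mem_univ, true_and] at hv
    obtain ⟨hvm, i, hvC, hcase⟩ := hv
    refine mem_biUnion.2 ⟨i, mem_univ i, ?_⟩
    simp only [hBadi, mem_union, mem_filter, mem_inter]
    rcases hcase with ⟨hvA, hMaj⟩ | ⟨hvB, hMaj⟩
    · exact Or.inl ⟨⟨⟨hvC, hvm⟩, hvA⟩, hMaj⟩
    · exact Or.inr ⟨⟨⟨hvC, hvm⟩, hvB⟩, hMaj⟩
  -- step 4 : sum of class sizes ≤ |m|
  have hsum : ∑ i, (C i ∩ m).card ≤ m.card := by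
    rw [← Finset.card_biUnion (fun i _ j _ hij =>
      (hCdisj i j hij).mono inter_subset_left inter_subset_left)]
    exact card_le_card (biUnion_subset.2 fun i _ => inter_subset_right)
  have h4Bad : 4 * Bad.card ≤ m.card := by
    calc 4 * Bad.card ≤ 4 * (univ.biUnion Badi).card := by
          exact Nat.mul_le_mul_left 4 (card_le_card hBadsub)
    _ ≤ 4 * ∑ i, (Badi i).card := Nat.mul_le_mul_left 4 (card_biUnion_le)
    _ = ∑ i, 4 * (Badi i).card := by rw [Finset.mul_sum]
    _ ≤ ∑ i, (C i ∩ m).card := Finset.sum_le_sum fun i _ => hclass i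
    _ ≤ m.card := hsum
  have hm2 : m.card ≤ 2 * M.card := by
    calc m.card ≤ (M.image Prod.fst).card + (M.image Prod.snd).card := card_union_le _ _
    _ ≤ M.card + M.card := Nat.add_le_add (card_image_le) (card_image_le)
    _ = 2 * M.card := by ring
  omega
end
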